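/- Let θ*, θ̂ ∈ ℝ^n, let 𝓜 ⊆ [n], let η_{mk} > 0 for all m ∈ 𝓜 and k ≠ m, let L > 0 and ζ ≥ 0, and let r_m = 1 + #{k ∈ [n] : θ*_k > θ*_m}. If max_{m∈𝓜} max_{k≠m} |√L·(θ̂_k − θ̂_m − (θ*_k − θ*_m))/η_{mk}| ≤ ζ, then for every m ∈ 𝓜: R_m◇ ≤ r_m ≤ R_m♯, where R_m◇ = 1 + ∑_{k≠m} 1{θ̂_k − θ̂_m > (η_{mk}/√L)·ζ} and R_m♯ = n − ∑_{k≠m} 1{θ̂_k − θ̂_m < −(η_{mk}/√L)·ζ}. -/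

import Mathlib

open Finset

/-!
On the event that every studentized difference is at most `ζ`, each estimated gap
`θ̂_k - θ̂_m` lies within `c_k = η_{mk} ζ / √L` of the true gap `θ*_k - θ*_m`. An estimated gap
above `c_k` thus certifies `θ*_k > θ*_m`, giving the lower rank bound; an estimated gap below
`-c_k` certifies `θ*_k < θ*_m`, so these `k`, the items beating `m`, and `m` itself are
pairwise distinct, giving the upper rank bound.
-/

theorem abs_le_div_mul_of_abs_mul_div_le {s η ζ x : ℝ} (hs : 0 < s) (hη : 0 < η)
    (h : |s * x / η| ≤ ζ) : |x| ≤ η / s * ζ := by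
  rw [abs_div, abs_mul, abs_of_pos hs, abs_of_pos hη, div_le_iff₀ hη] at h
  rw [div_mul_eq_mul_div, le_div_iff₀ hs]
  linarith

section Rank

variable {ι : Type*} [Fintype ι] [DecidableEq ι] (θs θh c : ι → ℝ) (m : ι)

theorem filter_gap_gt_subset_filter_lt
    (h : ∀ k, k ≠ m → θh k - θh m - (θs k - θs m) ≤ c k) :
    univ.filter (fun k => k ≠ m ∧ c k < θh k - θh m) ⊆ univ.filter (fun k => θs m < θs k) := by
  intro k hk
  simp only [mem_filter, mem_univ, true_and] at hk ⊢
  linarith [h k hk.1]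

theorem one_add_card_filter_lt_add_card_filter_gap_lt_le
    (h : ∀ k, k ≠ m → -c k ≤ θh k - θh m - (θs k - θs m)) :
    1 + (univ.filter fun k => θs m < θs k).card
        + (univ.filter fun k => k ≠ m ∧ θh k - θh m < -c k).card ≤ Fintype.card ι := by
  have hdisj : Disjoint (univ.filter fun k => θs m < θs k)
      (univ.filter fun k => k ≠ m ∧ θh k - θh m < -c k) := by
    rw [disjoint_filter]
    rintro k - hbeats ⟨hk, hgap⟩
    linarith [h k hk]
  have hm : m ∉ (univ.filter fun k => θs m < θs k) ∪
      (univ.filter fun k => k ≠ m ∧ θh k - θh m < -c k) := by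
    simp
  have := card_lt_univ_of_notMem hm
  rw [card_union_of_disjoint hdisj] at this
  omega

end Rank

theorem simultaneous_rank_confidence_intervals_general (n : ℕ) (θs θh : Fin n → ℝ)
    (𝓜 : Finset (Fin n)) (η : Fin n → Fin n → ℝ)
    (hη : ∀ m ∈ 𝓜, ∀ k, k ≠ m → 0 < η m k)
    (L : ℝ) (hL : 0 < L) (ζ : ℝ)
    (hmax : ∀ m ∈ 𝓜, ∀ k, k ≠ m →
      |Real.sqrt L * (θh k - θh m - (θs k - θs m)) / η m k| ≤ ζ) :
    ∀ m ∈ 𝓜,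
      1 + (Finset.univ.filter fun k => k ≠ m ∧ η m k / Real.sqrt L * ζ < θh k - θh m).card ≤
          1 + (Finset.univ.filter fun k => θs m < θs k).card ∧
        1 + (Finset.univ.filter fun k => θs m < θs k).card ≤
          n - (Finset.univ.filter fun k =>
              k ≠ m ∧ θh k - θh m < -(η m k / Real.sqrt L * ζ)).card := by
  intro m hm
  have hgap : ∀ k, k ≠ m → |θh k - θh m - (θs k - θs m)| ≤ η m k / Real.sqrt L * ζ :=
    fun k hk => abs_le_div_mul_of_abs_mul_div_le (Real.sqrt_pos.2 hL) (hη m hm k hk)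
      (hmax m hm k hk)
  refine ⟨Nat.add_le_add_left (card_le_card <| filter_gap_gt_subset_filter_lt θs θh _ m
    fun k hk => (abs_le.1 (hgap k hk)).2) 1, ?_⟩
  have := one_add_card_filter_lt_add_card_filter_gap_lt_le θs θh
    (fun k => η m k / Real.sqrt L * ζ) m fun k hk => (abs_le.1 (hgap k hk)).1
  rw [Fintype.card_fin] at this
  omega

/--
if the studentized pairwise differences are uniformly bounded by `ζ`, i.e.
`max_{m ∈ 𝓜} max_{k ≠ m} |√L (θ̂_k - θ̂_m - (θ*_k - θ*_m)) / η_{mk}| ≤ ζ`, then for every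
`m ∈ 𝓜` the population rank `r_m = 1 + #{k : θ*_k > θ*_m}` satisfies `R_m◇ ≤ r_m ≤ R_m♯`,
where `R_m◇ = 1 + ∑_{k ≠ m} 1{θ̂_k - θ̂_m > (η_{mk}/√L)·ζ}` and
`R_m♯ = n - ∑_{k ≠ m} 1{θ̂_k - θ̂_m < -(η_{mk}/√L)·ζ}`.
-/
theorem simultaneous_rank_confidence_intervals (n : ℕ) (θs θh : Fin n → ℝ)
    (𝓜 : Finset (Fin n)) (η : Fin n → Fin n → ℝ)
    (hη : ∀ m ∈ 𝓜, ∀ k, k ≠ m → 0 < η m k)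
    (L : ℝ) (hL : 0 < L) (ζ : ℝ) (hζ : 0 ≤ ζ)
    (hmax : ∀ m ∈ 𝓜, ∀ k, k ≠ m →
      |Real.sqrt L * (θh k - θh m - (θs k - θs m)) / η m k| ≤ ζ) :
    ∀ m ∈ 𝓜,
      1 + (Finset.univ.filter fun k => k ≠ m ∧ η m k / Real.sqrt L * ζ < θh k - θh m).card ≤
          1 + (Finset.univ.filter fun k => θs m < θs k).card ∧
        1 + (Finset.univ.filter fun k => θs m < θs k).card ≤
          n - (Finset.univ.filter fun k =>
              k ≠ m ∧ θh k - θh m < -(η m k / Real.sqrt L * ζ)).card :=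
  simultaneous_rank_confidence_intervals_general n θs θh 𝓜 η hη L hL ζ hmax
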